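/- arXiv:1208.0856 — 2 statements merged into one kernel-verified Lean document; each statement's English description precedes it below -/
import Mathlib

section
/- Assume: every singleton {x} ⊆ X is μ-null; μ has full support (every nonempty open subset of X has positive μ-measure); and the diagonal action of G on X×X, g·(x,y) = (g·x, g·y), is ergodic with respect to μ×μ, meaning that every Borel set S ⊆ X×X satisfying g·S = S for all g ∈ G has (μ×μ)(S) = 0 or (μ×μ)(S) = 1. If φ: X → ℂ is a continuous function with Σ_{g ∈ G} σ_G(φ)(g)² < ∞, then φ is constant. -/
/-!
Write `m g = ∫ φ (g • ·) dμ`. The squared deviation at `g` is the variance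
`∫ |φ (g • x) - m g|² dμ`, so summability makes `(φ (g • x))_g` lie at finite `ℓ²(G)`-distance
from `m` for almost every `x`. The function `F (x, y) = ∑_g |φ (g • x) - φ (g • y)|²` is the
squared `ℓ²`-distance between these points; it is invariant under the diagonal action, so each
level set `{r < F}` is null or conull. Separability of `ℓ²(G)` yields a set `A` of positive
measure whose image has diameter less than `√r`, so `{F < r} ⊇ A × A` is never null. Hence
`F = 0` almost everywhere, i.e. `φ x = φ y` for almost every pair, and full support together with
continuity forces `φ` to be constant.
-/

open MeasureTheory Filter Topology

noncomputable section

/-- The `G`-deviation of a continuous function `φ` with respect to `μ`: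
`σ_G(φ)(g) = ( ∫ |φ(g·x)|² dμ − |∫ φ(g·x) dμ|² )^(1/2)`. -/
def gDeviation {G X : Type*} [Group G] [TopologicalSpace X] [MulAction G X]
    [MeasurableSpace X] (μ : Measure X) (φ : C(X, ℂ)) (g : G) : ℝ :=
  Real.sqrt ((∫ x, ‖φ (g • x)‖ ^ 2 ∂μ) - ‖∫ x, φ (g • x) ∂μ‖ ^ 2)

open scoped ENNReal

theorem integral_norm_sub_integral_sq {X E : Type*} [MeasurableSpace X] {μ : Measure X}
    [IsProbabilityMeasure μ] [NormedAddCommGroup E] [InnerProductSpace ℝ E] [CompleteSpace E]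
    {f : X → E} (hf : MemLp f 2 μ) :
    ∫ x, ‖f x - ∫ y, f y ∂μ‖ ^ 2 ∂μ = ∫ x, ‖f x‖ ^ 2 ∂μ - ‖∫ x, f x ∂μ‖ ^ 2 := by
  set m := ∫ y, f y ∂μ with hm
  have hf1 : Integrable f μ := hf.integrable one_le_two
  have hf2 : Integrable (fun x => ‖f x‖ ^ 2) μ := hf.integrable_norm_pow two_ne_zero
  have hinner : Integrable (fun x => 2 * inner ℝ m (f x)) μ :=
    (hf1.const_inner m).const_mul 2
  calc ∫ x, ‖f x - m‖ ^ 2 ∂μ = ∫ x, ‖f x‖ ^ 2 - 2 * inner ℝ m (f x) + ‖m‖ ^ 2 ∂μ := by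
        simp_rw [norm_sub_sq_real, real_inner_comm]
    _ = ∫ x, ‖f x‖ ^ 2 ∂μ - 2 * inner ℝ m m + ‖m‖ ^ 2 := by
        rw [integral_add (f := fun x => ‖f x‖ ^ 2 - 2 * inner ℝ m (f x)) (hf2.sub hinner)
          (integrable_const _), integral_sub hf2 hinner, integral_const_mul,
          integral_inner hf1, ← hm, integral_const]
        simp
    _ = ∫ x, ‖f x‖ ^ 2 ∂μ - ‖m‖ ^ 2 := by rw [real_inner_self_eq_norm_sq]; ring

theorem ae_tsum_ne_top_of_tsum_lintegral_ne_top {X ι : Type*} [MeasurableSpace X]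
    {μ : Measure X} [Countable ι] {f : ι → X → ℝ≥0∞} (hf : ∀ i, AEMeasurable (f i) μ)
    (h : ∑' i, ∫⁻ x, f i x ∂μ ≠ ∞) : ∀ᵐ x ∂μ, ∑' i, f i x ≠ ∞ := by
  rw [← lintegral_tsum hf] at h
  exact (ae_lt_top' (AEMeasurable.tsum hf) h).mono fun x hx => hx.ne

theorem ENNReal.add_sq_le (a b : ℝ≥0∞) : (a + b) ^ 2 ≤ 2 * (a ^ 2 + b ^ 2) := by
  rcases eq_or_ne a ∞ with rfl | ha
  · simp
  rcases eq_or_ne b ∞ with rfl | hb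
  · simp
  lift a to NNReal using ha
  lift b to NNReal using hb
  exact_mod_cast (_root_.add_sq_le : (a + b) ^ 2 ≤ 2 * (a ^ 2 + b ^ 2))

theorem edist_sq_le_two_mul_add {E : Type*} [PseudoEMetricSpace E] (a b c : E) :
    edist a b ^ 2 ≤ 2 * (edist a c ^ 2 + edist c b ^ 2) :=
  (pow_le_pow_left₀ bot_le (edist_triangle a c b) 2).trans (ENNReal.add_sq_le _ _)

section SquareSummable

variable {ι E : Type*} [Countable ι] [PseudoEMetricSpace E] [TopologicalSpace.SeparableSpace E]

theorem exists_countable_tsum_edist_sq_lt (w : ι → E) :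
    ∃ C : Set (ι → E), C.Countable ∧ ∀ f : ι → E, ∑' i, edist (f i) (w i) ^ 2 ≠ ∞ →
      ∀ r, 0 < r → ∃ u ∈ C, ∑' i, edist (f i) (u i) ^ 2 < r := by
  classical
  have : Nonempty (ι → E) := ⟨w⟩
  set y := TopologicalSpace.denseSeq (ι → E)
  let u : Finset ι × ℕ → ι → E := fun k i => if i ∈ k.1 then y k.2 i else w i
  refine ⟨Set.range u, Set.countable_range u, fun f hf r hr => ?_⟩
  obtain ⟨s, hs⟩ := ((ENNReal.tendsto_tsum_compl_atTop_zero hf).eventually_lt_const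
    (ENNReal.half_pos hr.ne')).exists
  have hopen : IsOpen {z : ι → E | ∑ i ∈ s, edist (f i) (z i) ^ 2 < r / 2} :=
    isOpen_lt (by fun_prop) continuous_const
  obtain ⟨n, hn⟩ := (TopologicalSpace.denseRange_denseSeq (ι → E)).exists_mem_open hopen
    ⟨f, by simpa using ENNReal.half_pos hr.ne'⟩
  refine ⟨u (s, n), Set.mem_range_self _, ?_⟩
  rw [← ENNReal.sum_add_tsum_compl s]
  calc ∑ i ∈ s, edist (f i) (u (s, n) i) ^ 2
        + ∑' i : ↑(s : Set ι)ᶜ, edist (f i) (u (s, n) i) ^ 2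
      = ∑ i ∈ s, edist (f i) (y n i) ^ 2 + ∑' i : ↑(s : Set ι)ᶜ, edist (f i) (w i) ^ 2 := by
        congr 1
        · exact Finset.sum_congr rfl fun i hi => by simp [u, hi]
        · exact tsum_congr fun i => by simp [u, show (i : ι) ∉ s from i.2]
    _ < r / 2 + r / 2 := ENNReal.add_lt_add hn hs
    _ = r := ENNReal.add_halves r

theorem measure_prod_tsum_edist_sq_lt_pos {X : Type*} [MeasurableSpace X] {μ : Measure X}
    [SFinite μ] (hμ : μ ≠ 0) (w : ι → E) {v : X → ι → E}
    (hv : ∀ᵐ x ∂μ, ∑' i, edist (v x i) (w i) ^ 2 ≠ ∞) {r : ℝ≥0∞} (hr : 0 < r) :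
    0 < (μ.prod μ) {p | ∑' i, edist (v p.1 i) (v p.2 i) ^ 2 < r} := by
  obtain ⟨C, hC, happrox⟩ := exists_countable_tsum_edist_sq_lt w
  have := hC.to_subtype
  set A : C → Set X := fun u => {x | ∑' i, edist (v x i) (u.1 i) ^ 2 < r / 2 / 2}
  have hcover : ⋃ u, A u =ᵐ[μ] Set.univ := by
    refine eventuallyEq_univ.2 (hv.mono fun x hx => ?_)
    obtain ⟨u, hu, hxu⟩ := happrox _ hx _ (ENNReal.half_pos (ENNReal.half_pos hr.ne').ne')
    exact Set.mem_iUnion.2 ⟨⟨u, hu⟩, hxu⟩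
  obtain ⟨u, hu⟩ := exists_measure_pos_of_not_measure_iUnion_null
    ((measure_congr hcover).trans_ne (Measure.measure_univ_ne_zero.2 hμ))
  refine (ENNReal.mul_pos hu.ne' hu.ne').trans_le ?_
  rw [← Measure.prod_prod]
  refine measure_mono fun p ⟨hp₁, hp₂⟩ => ?_
  calc ∑' i, edist (v p.1 i) (v p.2 i) ^ 2
      ≤ ∑' i, 2 * (edist (v p.1 i) (u.1 i) ^ 2 + edist (u.1 i) (v p.2 i) ^ 2) :=
        ENNReal.tsum_le_tsum fun i => edist_sq_le_two_mul_add _ _ _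
    _ = 2 * (∑' i, edist (v p.1 i) (u.1 i) ^ 2 + ∑' i, edist (v p.2 i) (u.1 i) ^ 2) := by
        simp_rw [ENNReal.tsum_mul_left, ENNReal.tsum_add, edist_comm (u.1 _)]
    _ < r := ENNReal.mul_lt_of_lt_div' <|
        (ENNReal.add_halves (r / 2)) ▸ ENNReal.add_lt_add hp₁ hp₂

end SquareSummable

theorem ae_eq_zero_of_smul_invariant {G Y : Type*} [Group G] [MulAction G Y]
    [MeasurableSpace Y] (ν : Measure Y) [IsProbabilityMeasure ν]
    (hergodic : ∀ S : Set Y, MeasurableSet S → (∀ g : G, (fun y => g • y) '' S = S) →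
      ν S = 0 ∨ ν S = 1)
    {F : Y → ℝ≥0∞} (hF : Measurable F) (hinv : ∀ (g : G) y, F (g • y) = F y)
    (hsmall : ∀ r, 0 < r → 0 < ν {y | F y < r}) : ∀ᵐ y ∂ν, F y = 0 := by
  have hlevel : ∀ r, 0 < r → ∀ᵐ y ∂ν, F y ≤ r := by
    intro r hr
    have hS : MeasurableSet {y | r < F y} := hF measurableSet_Ioi
    have hSinv : ∀ g : G, (fun y => g • y) '' {y | r < F y} = {y | r < F y} := by
      intro g
      rw [Set.image_eq_preimage_of_inverse (inv_smul_smul g) (smul_inv_smul g)]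
      ext y
      simp [hinv]
    have hnull : ν {y | r < F y} = 0 :=
      (hergodic _ hS hSinv).resolve_right fun hone => (hsmall r hr).ne' <|
        measure_mono_null (fun y (hy : F y < r) => not_lt.2 hy.le)
          ((prob_compl_eq_zero_iff hS).2 hone)
    exact ae_iff.2 (by simpa only [not_le] using hnull)
  filter_upwards [ae_all_iff.2 fun n : ℕ =>
    hlevel (n : ℝ≥0∞)⁻¹ (ENNReal.inv_pos.2 (ENNReal.natCast_ne_top n))] with y hy
  by_contra hne
  obtain ⟨n, hn⟩ := ENNReal.exists_inv_nat_lt hne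
  exact (hy n).not_gt hn

section Deviation

variable {G X : Type*} [Group G] [TopologicalSpace X] [CompactSpace X] [MeasurableSpace X]
  [BorelSpace X] [MulAction G X] [ContinuousConstSMul G X] (μ : Measure X)
  [IsProbabilityMeasure μ] (φ : C(X, ℂ))

theorem gDeviation_sq (g : G) :
    gDeviation μ φ g ^ 2 = ∫ x, ‖φ (g • x) - ∫ y, φ (g • y) ∂μ‖ ^ 2 ∂μ := by
  have hφg : MemLp (fun x => φ (g • x)) 2 μ :=
    (φ.continuous.comp (continuous_const_smul g)).memLp_of_hasCompactSupport
      (isClosed_tsupport _).isCompact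
  rw [gDeviation, ← integral_norm_sub_integral_sq hφg,
    Real.sq_sqrt (integral_nonneg fun _ => sq_nonneg _)]

theorem lintegral_edist_integral_sq (g : G) :
    ∫⁻ x, edist (φ (g • x)) (∫ y, φ (g • y) ∂μ) ^ 2 ∂μ =
      ENNReal.ofReal (gDeviation μ φ g ^ 2) := by
  have hcont : Continuous fun x => ‖φ (g • x) - ∫ y, φ (g • y) ∂μ‖ ^ 2 := by fun_prop
  rw [gDeviation_sq, ofReal_integral_eq_lintegral_ofReal
    (hcont.integrable_of_hasCompactSupport (isClosed_tsupport _).isCompact)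
    (ae_of_all _ fun _ => sq_nonneg _)]
  simp_rw [edist_dist, dist_eq_norm, ENNReal.ofReal_pow (norm_nonneg _)]

theorem ae_tsum_edist_integral_sq_ne_top [Countable G]
    (hφ : Summable fun g : G => gDeviation μ φ g ^ 2) :
    ∀ᵐ x ∂μ, ∑' g : G, edist (φ (g • x)) (∫ y, φ (g • y) ∂μ) ^ 2 ≠ ∞ := by
  refine ae_tsum_ne_top_of_tsum_lintegral_ne_top (fun g => ?_) ?_
  · exact (((φ.continuous.comp (continuous_const_smul g)).edist
      continuous_const).measurable.pow_const 2).aemeasurable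
  · simp_rw [lintegral_edist_integral_sq,
      ← ENNReal.ofReal_tsum_of_nonneg (fun g => sq_nonneg _) hφ]
    exact ENNReal.ofReal_ne_top

end Deviation

theorem const_of_sq_summable_deviation_general
    {G X : Type*} [Group G] [Countable G]
    [TopologicalSpace X] [CompactSpace X]
    [MeasurableSpace X] [BorelSpace X]
    [MulAction G X] [ContinuousConstSMul G X]
    (μ : Measure X) [IsProbabilityMeasure μ]
    (hsupp : ∀ U : Set X, IsOpen U → U.Nonempty → 0 < μ U)
    (hergodic : ∀ S : Set (X × X), MeasurableSet S →
      (∀ g : G, (fun p : X × X => (g • p.1, g • p.2)) '' S = S) →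
      (μ.prod μ) S = 0 ∨ (μ.prod μ) S = 1)
    (φ : C(X, ℂ)) (hφ : Summable fun g : G => gDeviation μ φ g ^ 2) :
    ∃ c : ℂ, ∀ x : X, φ x = c := by
  set F : X × X → ℝ≥0∞ := fun p => ∑' g : G, edist (φ (g • p.1)) (φ (g • p.2)) ^ 2
  have hF : Measurable F := Measurable.tsum fun g => by fun_prop
  have hinv (g : G) (p : X × X) : F (g • p) = F p := by
    simpa [F, mul_smul] using
      (Equiv.mulRight g).tsum_eq fun h => edist (φ (h • p.1)) (φ (h • p.2)) ^ 2
  have hF0 : ∀ᵐ p ∂μ.prod μ, F p = 0 :=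
    ae_eq_zero_of_smul_invariant (μ.prod μ) hergodic hF hinv fun r hr =>
      measure_prod_tsum_edist_sq_lt_pos (IsProbabilityMeasure.ne_zero μ) _
        (ae_tsum_edist_integral_sq_ne_top μ φ hφ) hr
  have : μ.IsOpenPosMeasure := ⟨fun U hU hne => (hsupp U hU hne).ne'⟩
  have hdiag : (fun p : X × X => φ p.1) = fun p => φ p.2 :=
    (Continuous.ae_eq_iff_eq _ (by fun_prop) (by fun_prop)).1 <|
      hF0.mono fun p hp => by simpa using ENNReal.tsum_eq_zero.1 hp 1
  rcases isEmpty_or_nonempty X with _ | ⟨⟨x₀⟩⟩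
  · exact ⟨0, fun x => isEmptyElim x⟩
  · exact ⟨φ x₀, fun x => congrFun hdiag (x, x₀)⟩

/-- If points are `μ`-negligible, `μ` has full support, and the diagonal action of `G`
on `X × X` is ergodic for `μ × μ`, then a continuous function whose `G`-deviation is
square-summable must be constant. In particular, `ℓ^p`-deviation forces `p > 2`. -/
theorem const_of_sq_summable_deviation
    {G X : Type*} [Group G] [Countable G]
    [TopologicalSpace X] [CompactSpace X] [TopologicalSpace.MetrizableSpace X]
    [MeasurableSpace X] [BorelSpace X]
    [MulAction G X] [ContinuousConstSMul G X]
    (μ : Measure X) [IsProbabilityMeasure μ]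
    (hpoints : ∀ x : X, μ {x} = 0)
    (hsupp : ∀ U : Set X, IsOpen U → U.Nonempty → 0 < μ U)
    (hergodic : ∀ S : Set (X × X), MeasurableSet S →
      (∀ g : G, (fun p : X × X => (g • p.1, g • p.2)) '' S = S) →
      (μ.prod μ) S = 0 ∨ (μ.prod μ) S = 1)
    (φ : C(X, ℂ)) (hφ : Summable fun g : G => gDeviation μ φ g ^ 2) :
    ∃ c : ℂ, ∀ x : X, φ x = c :=
  const_of_sq_summable_deviation_general μ hsupp hergodic φ hφ
end
end

section
/- Let (Y,d) be a compact metric space with a Borel probability measure μ, and let C, Q > 0 be constants with μ(closedBall(x,r)) ≤ C·r^Q for every x ∈ Y and r > 0. Let α > 0 satisfy 2α < Q. Then there exists a constant C' > 0, depending only on C, Q and α, with the following property: for every Borel measurable f: Y → Y, every z ∈ Y and M ≥ 0 with d(f ξ, f ξ')·d(z,ξ)·d(z,ξ') ≤ M for all ξ, ξ' ∈ Y, and every function φ: Y → ℂ satisfying the Hölder bound |φ(y) − φ(y')| ≤ H·d(y,y')^α for all y, y' ∈ Y (with H ≥ 0), one has ∫_Y |φ∘f|² dμ − |∫_Y φ∘f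 dμ|² ≤ C'·H²·M^{2α}. -/
/-!
Some point `ξ₀` lies at distance at least `r₀ = (2C)^(-1/Q)` from `z`, since balls of radius `r₀`
have measure at most `1/2`. The hypothesis on `f` then gives `d(f ξ, f ξ₀) ≤ (M / r₀) / d(z, ξ)`,
so `|φ (f ξ) - φ (f ξ₀)|² ≤ H² (M / r₀)^(2α) d(z, ξ)^(-2α)`. The variance is at most the mean
square deviation from any constant, and `d(z, ·)^(-2α)` has integral bounded in terms of
`C`, `Q`, `α`: the dyadic ball of radius `2^(-n)` contributes at most `C 2^(2α) 2^(-n(Q - 2α))`,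
a geometric series because `2α < Q`.
-/

open MeasureTheory Metric Filter Topology
open scoped ENNReal

section InnerProductSpace

variable {Ω E : Type*} [MeasurableSpace Ω] {μ : Measure Ω} [IsProbabilityMeasure μ]
  [NormedAddCommGroup E] [InnerProductSpace ℝ E] [CompleteSpace E]

theorem integral_norm_sub_const_sq {g : Ω → E} (hg : Integrable g μ)
    (hg2 : Integrable (fun ω ↦ ‖g ω‖ ^ 2) μ) (c : E) :
    ∫ ω, ‖g ω - c‖ ^ 2 ∂μ
      = ((∫ ω, ‖g ω‖ ^ 2 ∂μ) - ‖∫ ω, g ω ∂μ‖ ^ 2) + ‖(∫ ω, g ω ∂μ) - c‖ ^ 2 := by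
  have hinner : Integrable (fun ω ↦ 2 * inner ℝ c (g ω)) μ := (hg.const_inner c).const_mul 2
  simp_rw [norm_sub_rev _ c, norm_sub_sq_real c]
  rw [integral_add ((integrable_const _).sub' hinner) hg2, integral_sub (integrable_const _) hinner,
    integral_const_mul, integral_inner hg, integral_const, probReal_univ, one_smul]
  ring

theorem integral_norm_sq_sub_norm_integral_sq_le {g : Ω → E} (hg : Integrable g μ)
    (hg2 : Integrable (fun ω ↦ ‖g ω‖ ^ 2) μ) (c : E) :
    (∫ ω, ‖g ω‖ ^ 2 ∂μ) - ‖∫ ω, g ω ∂μ‖ ^ 2 ≤ ∫ ω, ‖g ω - c‖ ^ 2 ∂μ := by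
  rw [integral_norm_sub_const_sq hg hg2 c]
  exact le_add_of_nonneg_right (sq_nonneg _)

end InnerProductSpace

theorem continuous_of_norm_sub_le_mul_rpow {X E : Type*} [PseudoMetricSpace X]
    [SeminormedAddCommGroup E] {φ : X → E} {H α : ℝ} (hα : 0 < α)
    (hφ : ∀ y y', ‖φ y - φ y'‖ ≤ H * dist y y' ^ α) : Continuous φ := by
  refine continuous_iff_continuousAt.2 fun x ↦ tendsto_iff_norm_sub_tendsto_zero.2 ?_
  have hlim : Tendsto (fun y ↦ H * dist y x ^ α) (𝓝 x) (𝓝 (H * dist x x ^ α)) :=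
    ((continuous_id.dist continuous_const).rpow_const fun _ ↦ Or.inr hα.le).const_mul H
      |>.tendsto x
  rw [dist_self, Real.zero_rpow hα.ne', mul_zero] at hlim
  exact squeeze_zero (fun _ ↦ norm_nonneg _) (fun y ↦ hφ y x) hlim

theorem Continuous.integrable_comp_measurable {X Y E : Type*} [TopologicalSpace X]
    [CompactSpace X] [MeasurableSpace X] [OpensMeasurableSpace X] [MeasurableSpace Y]
    {μ : Measure Y} [IsFiniteMeasure μ] [NormedAddCommGroup E] {φ : X → E} (hφ : Continuous φ)
    {f : Y → X} (hf : Measurable f) : Integrable (φ ∘ f) μ :=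
  (hφ.integrable_of_hasCompactSupport (.of_compactSpace φ)).comp_measurable hf

theorem norm_comp_sub_sq_le_of_dist_mul_le {X Y E : Type*} [PseudoMetricSpace X]
    [PseudoMetricSpace Y] [SeminormedAddCommGroup E] {φ : X → E} {f : Y → X} {z ξ ξ₀ : Y}
    {H α M r : ℝ} (hφ : ∀ y y', ‖φ y - φ y'‖ ≤ H * dist y y' ^ α) (hH : 0 ≤ H) (hα : 0 ≤ α)
    (hM : dist (f ξ) (f ξ₀) * dist z ξ * dist z ξ₀ ≤ M) (hr : 0 < r) (hrξ₀ : r ≤ dist z ξ₀)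
    (hξ : 0 < dist z ξ) :
    ‖φ (f ξ) - φ (f ξ₀)‖ ^ 2 ≤ H ^ 2 * (M / r) ^ (2 * α) * dist z ξ ^ (-(2 * α)) := by
  have hM0 : 0 ≤ M := le_trans (by positivity) hM
  have hdist : dist (f ξ) (f ξ₀) ≤ M / r * (dist z ξ)⁻¹ := by
    rw [← div_eq_mul_inv, div_div, le_div_iff₀ (by positivity)]
    calc dist (f ξ) (f ξ₀) * (r * dist z ξ)
        ≤ dist (f ξ) (f ξ₀) * (dist z ξ₀ * dist z ξ) := by gcongr
      _ ≤ M := by linarith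
  calc ‖φ (f ξ) - φ (f ξ₀)‖ ^ 2 ≤ (H * (M / r * (dist z ξ)⁻¹) ^ α) ^ 2 := by
        gcongr
        exact (hφ _ _).trans (by gcongr)
    _ = H ^ 2 * (M / r) ^ (2 * α) * dist z ξ ^ (-(2 * α)) := by
        rw [Real.mul_rpow (by positivity) (by positivity), Real.inv_rpow hξ.le,
          ← Real.rpow_neg hξ.le, mul_comm 2 α, ← neg_mul, Real.rpow_mul (by positivity),
          Real.rpow_mul hξ.le, Real.rpow_two, Real.rpow_two]
        ring

theorem ofReal_dist_rpow_neg_le_one_add_tsum {Y : Type*} [PseudoMetricSpace Y] {s : ℝ}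
    (hs : 0 ≤ s) (z ξ : Y) :
    ENNReal.ofReal (dist z ξ ^ (-s)) ≤ 1 + ∑' n : ℕ,
      (closedBall z (2⁻¹ ^ n)).indicator
        (fun _ ↦ ENNReal.ofReal ((2⁻¹ ^ (n + 1) : ℝ) ^ (-s))) ξ := by
  by_cases hd : 0 < dist z ξ ∧ dist z ξ ≤ 1
  · obtain ⟨n, hlow, hup⟩ := exists_nat_pow_near_of_lt_one hd.1 hd.2
      (by norm_num : (0 : ℝ) < 2⁻¹) (by norm_num)
    refine le_trans ?_ ((ENNReal.le_tsum n).trans le_add_self)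
    rw [Set.indicator_of_mem (mem_closedBall'.2 hup)]
    exact ENNReal.ofReal_le_ofReal
      (Real.rpow_le_rpow_of_nonpos (by positivity) hlow.le (neg_nonpos.2 hs))
  · push Not at hd
    have hle : dist z ξ ^ (-s) ≤ 1 := by
      rcases (dist_nonneg (x := z) (y := ξ)).eq_or_lt with h0 | hpos
      · rw [← h0]
        exact Real.zero_rpow_le_one _
      · exact Real.rpow_le_one_of_one_le_of_nonpos (hd hpos).le (neg_nonpos.2 hs)
    exact (ENNReal.ofReal_le_one.2 hle).trans le_self_add

section AhlforsUpper

variable {Y : Type*} [PseudoMetricSpace Y] [MeasurableSpace Y] {μ : Measure Y}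

theorem nullSingletonClass_of_measure_closedBall_le {C Q : ℝ} (hQ : 0 < Q)
    (hreg : ∀ (x : Y) (r : ℝ), 0 < r → μ (closedBall x r) ≤ ENNReal.ofReal (C * r ^ Q)) :
    NullSingletonClass μ := by
  refine ⟨fun x ↦ nonpos_iff_eq_zero.1 ?_⟩
  have hlim : Tendsto (fun r : ℝ ↦ ENNReal.ofReal (C * r ^ Q)) (𝓝[>] 0) (𝓝 0) := by
    have hcont : ContinuousAt (fun r : ℝ ↦ ENNReal.ofReal (C * r ^ Q)) 0 :=
      ENNReal.continuous_ofReal.continuousAt.comp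
        (continuousAt_const.mul (Real.continuousAt_rpow_const 0 Q (Or.inr hQ.le)))
    simpa [Real.zero_rpow hQ.ne'] using hcont.tendsto.mono_left nhdsWithin_le_nhds
  exact ge_of_tendsto hlim <| eventually_nhdsWithin_of_forall fun r hr ↦
    (measure_mono (Set.singleton_subset_iff.2 (mem_closedBall_self (le_of_lt hr)))).trans
      (hreg x r hr)

theorem exists_lt_dist_of_measure_closedBall_lt_one [IsProbabilityMeasure μ] (z : Y) {r : ℝ}
    (h : μ (closedBall z r) < 1) : ∃ ξ, r < dist z ξ := by
  by_contra! hfar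
  have hball : closedBall z r = Set.univ :=
    Set.eq_univ_of_forall fun ξ ↦ mem_closedBall'.2 (hfar ξ)
  simp [hball] at h

variable [OpensMeasurableSpace Y] [IsProbabilityMeasure μ]

theorem lintegral_dist_rpow_neg_le {C Q s : ℝ} (hC : 0 ≤ C) (hs : 0 ≤ s) (hsQ : s < Q) (z : Y)
    (hreg : ∀ r : ℝ, 0 < r → μ (closedBall z r) ≤ ENNReal.ofReal (C * r ^ Q)) :
    ∫⁻ ξ, ENNReal.ofReal (dist z ξ ^ (-s)) ∂μ
      ≤ ENNReal.ofReal (1 + C * 2 ^ s * (1 - 2⁻¹ ^ (Q - s))⁻¹) := by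
  set ρ : ℝ := 2⁻¹ ^ (Q - s)
  have hρ0 : 0 ≤ ρ := by positivity
  have hρ1 : ρ < 1 := Real.rpow_lt_one (by norm_num) (by norm_num) (by linarith)
  have hterm (n : ℕ) :
      ENNReal.ofReal ((2⁻¹ ^ (n + 1) : ℝ) ^ (-s)) * μ (closedBall z (2⁻¹ ^ n))
        ≤ ENNReal.ofReal (C * 2 ^ s * ρ ^ n) := by
    have ht : (0 : ℝ) < 2⁻¹ ^ n := by positivity
    calc _ ≤ ENNReal.ofReal ((2⁻¹ ^ (n + 1) : ℝ) ^ (-s)) * ENNReal.ofReal (C * (2⁻¹ ^ n) ^ Q) :=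
          mul_le_mul_right (hreg _ ht) _
      _ = ENNReal.ofReal (C * 2 ^ s * ρ ^ n) := by
          rw [← ENNReal.ofReal_mul (by positivity), pow_succ, Real.mul_rpow ht.le (by norm_num),
            Real.inv_rpow zero_le_two, Real.rpow_neg zero_le_two, inv_inv,
            Real.rpow_pow_comm (by norm_num), Real.rpow_sub ht, Real.rpow_neg ht.le]
          field_simp
  calc ∫⁻ ξ, ENNReal.ofReal (dist z ξ ^ (-s)) ∂μ
      ≤ ∫⁻ ξ, 1 + ∑' n : ℕ, (closedBall z (2⁻¹ ^ n)).indicator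
          (fun _ ↦ ENNReal.ofReal ((2⁻¹ ^ (n + 1) : ℝ) ^ (-s))) ξ ∂μ :=
        lintegral_mono fun ξ ↦ ofReal_dist_rpow_neg_le_one_add_tsum hs z ξ
    _ = 1 + ∑' n : ℕ,
          ENNReal.ofReal ((2⁻¹ ^ (n + 1) : ℝ) ^ (-s)) * μ (closedBall z (2⁻¹ ^ n)) := by
        rw [lintegral_add_left measurable_const, lintegral_one, measure_univ,
          lintegral_tsum fun _ ↦ (measurable_const.indicator measurableSet_closedBall).aemeasurable]
        simp_rw [lintegral_indicator_const measurableSet_closedBall]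
    _ ≤ 1 + ∑' n : ℕ, ENNReal.ofReal (C * 2 ^ s * ρ ^ n) := by gcongr with n; exact hterm n
    _ = ENNReal.ofReal (1 + C * 2 ^ s * (1 - ρ)⁻¹) := by
        have h1ρ : 0 < 1 - ρ := by linarith
        rw [← ENNReal.ofReal_tsum_of_nonneg (fun n ↦ by positivity)
          ((summable_geometric_of_lt_one hρ0 hρ1).mul_left _), tsum_mul_left,
          tsum_geometric_of_lt_one hρ0 hρ1, ENNReal.ofReal_add zero_le_one (by positivity),
          ENNReal.ofReal_one]

theorem integrable_dist_rpow_neg {C Q s : ℝ} (hC : 0 ≤ C) (hs : 0 ≤ s) (hsQ : s < Q) (z : Y)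
    (hreg : ∀ r : ℝ, 0 < r → μ (closedBall z r) ≤ ENNReal.ofReal (C * r ^ Q)) :
    Integrable (fun ξ ↦ dist z ξ ^ (-s)) μ :=
  ⟨((continuous_const.dist continuous_id).measurable.pow_const _).aestronglyMeasurable,
    (hasFiniteIntegral_iff_ofReal (ae_of_all _ fun _ ↦ by positivity)).2
      ((lintegral_dist_rpow_neg_le hC hs hsQ z hreg).trans_lt ENNReal.ofReal_lt_top)⟩

theorem integral_dist_rpow_neg_le {C Q s : ℝ} (hC : 0 ≤ C) (hs : 0 ≤ s) (hsQ : s < Q) (z : Y)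
    (hreg : ∀ r : ℝ, 0 < r → μ (closedBall z r) ≤ ENNReal.ofReal (C * r ^ Q)) :
    ∫ ξ, dist z ξ ^ (-s) ∂μ ≤ 1 + C * 2 ^ s * (1 - 2⁻¹ ^ (Q - s))⁻¹ := by
  have hρ1 : (2⁻¹ : ℝ) ^ (Q - s) < 1 :=
    Real.rpow_lt_one (by norm_num) (by norm_num) (by linarith)
  rw [integral_eq_lintegral_of_nonneg_ae (ae_of_all _ fun _ ↦ by positivity)
    (integrable_dist_rpow_neg hC hs hsQ z hreg).aestronglyMeasurable]
  exact ENNReal.toReal_le_of_le_ofReal (by have := sub_pos.2 hρ1; positivity)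
    (lintegral_dist_rpow_neg_le hC hs hsQ z hreg)

end AhlforsUpper

/-- Variance bound for Hölder functions composed with a contracting map.
On a compact metric space with the upper Ahlfors-regularity bound `μ(B̄(x,r)) ≤ C·r^Q`
and for `0 < α` with `2α < Q`, there is `C' > 0` (depending only on `C`, `Q`, `α`)
such that: for every Borel `f : Y → Y`, `z ∈ Y`, `M ≥ 0` with
`d(f ξ, f ξ')·d(z,ξ)·d(z,ξ') ≤ M` for all `ξ, ξ'`, and every `α`-Hölder `φ : Y → ℂ`
with Hölder constant `H ≥ 0`, one has
`∫ |φ∘f|² dμ − |∫ φ∘f dμ|² ≤ C'·H²·M^(2α)`. -/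
theorem variance_bound_of_ahlfors_upper
    {Y : Type*} [MetricSpace Y] [CompactSpace Y] [MeasurableSpace Y] [BorelSpace Y]
    (μ : Measure Y) [IsProbabilityMeasure μ]
    (C Q : ℝ) (hC : 0 < C) (hQ : 0 < Q)
    (hreg : ∀ (x : Y) (r : ℝ), 0 < r →
      μ (Metric.closedBall x r) ≤ ENNReal.ofReal (C * r ^ Q))
    (α : ℝ) (hα : 0 < α) (hαQ : 2 * α < Q) :
    ∃ C' : ℝ, 0 < C' ∧ ∀ f : Y → Y, Measurable f → ∀ (z : Y) (M : ℝ), 0 ≤ M →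
      (∀ ξ ξ' : Y, dist (f ξ) (f ξ') * dist z ξ * dist z ξ' ≤ M) →
      ∀ (φ : Y → ℂ) (H : ℝ), 0 ≤ H →
      (∀ y y' : Y, ‖φ y - φ y'‖ ≤ H * dist y y' ^ α) →
      (∫ ξ, ‖φ (f ξ)‖ ^ 2 ∂μ) - ‖∫ ξ, φ (f ξ) ∂μ‖ ^ 2 ≤ C' * H ^ 2 * M ^ (2 * α) := by
  obtain ⟨r₀, hr₀, hCr₀⟩ : ∃ r : ℝ, 0 < r ∧ C * r ^ Q < 1 :=
    ⟨(2 * C)⁻¹ ^ Q⁻¹, by positivity, by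
      rw [Real.rpow_inv_rpow (by positivity) hQ.ne']
      field_simp
      norm_num⟩
  set K := 1 + C * 2 ^ (2 * α) * (1 - 2⁻¹ ^ (Q - 2 * α))⁻¹
  have hK : 0 < K := by
    have := sub_pos.2 (Real.rpow_lt_one (by norm_num : (0 : ℝ) ≤ 2⁻¹) (by norm_num)
      (by linarith : 0 < Q - 2 * α))
    positivity
  refine ⟨K / r₀ ^ (2 * α), by positivity, fun f hf z M hM0 hM φ H hH hφ ↦ ?_⟩
  have := nullSingletonClass_of_measure_closedBall_le hQ hreg
  obtain ⟨ξ₀, hξ₀⟩ := exists_lt_dist_of_measure_closedBall_lt_one z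
    ((hreg z r₀ hr₀).trans_lt (ENNReal.ofReal_lt_one.2 hCr₀))
  have hφc := continuous_of_norm_sub_le_mul_rpow hα hφ
  have hpt : ∀ᵐ ξ ∂μ, ‖φ (f ξ) - φ (f ξ₀)‖ ^ 2
      ≤ H ^ 2 * (M / r₀) ^ (2 * α) * dist z ξ ^ (-(2 * α)) := by
    filter_upwards [Measure.ae_ne μ z] with ξ hξ
    exact norm_comp_sub_sq_le_of_dist_mul_le hφ hH hα.le (hM ξ ξ₀) hr₀ hξ₀.le
      (dist_pos.2 hξ.symm)
  calc (∫ ξ, ‖φ (f ξ)‖ ^ 2 ∂μ) - ‖∫ ξ, φ (f ξ) ∂μ‖ ^ 2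
      ≤ ∫ ξ, ‖φ (f ξ) - φ (f ξ₀)‖ ^ 2 ∂μ :=
        integral_norm_sq_sub_norm_integral_sq_le (hφc.integrable_comp_measurable hf)
          ((hφc.norm.pow 2).integrable_comp_measurable hf) _
    _ ≤ ∫ ξ, H ^ 2 * (M / r₀) ^ (2 * α) * dist z ξ ^ (-(2 * α)) ∂μ :=
        integral_mono_of_nonneg (ae_of_all _ fun _ ↦ by positivity)
          ((integrable_dist_rpow_neg hC.le (by positivity) hαQ z (hreg z)).const_mul _) hpt
    _ = H ^ 2 * (M / r₀) ^ (2 * α) * ∫ ξ, dist z ξ ^ (-(2 * α)) ∂μ := integral_const_mul _ _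
    _ ≤ H ^ 2 * (M / r₀) ^ (2 * α) * K := by
        gcongr
        exact integral_dist_rpow_neg_le hC.le (by positivity) hαQ z (hreg z)
    _ = K / r₀ ^ (2 * α) * H ^ 2 * M ^ (2 * α) := by
        rw [Real.div_rpow hM0 hr₀.le]
        ring
end
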